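/- arXiv:1410.1465 — 5 statements merged into one kernel-verified Lean document; each statement's English description precedes it below -/
import Mathlib

section
/- Let G be a matrix Lie group and suppose for every pair of solutions χ_t, χ̄_t of dχ/dt = f_{u_t}(χ) the left-invariant error η_t = χ_t^{-1} χ̄_t satisfies an autonomous equation dη/dt = g_{u_t}(η_t) depending only on η_t and u_t. Then necessarily f_{u}(ab) = f_u(a)b + a f_u(b) - a f_u(Id) b for all a, b ∈ G and all inputs u, and moreover g_u(η) = f_u(η) - f_u(Id)·η. -/
/-! Differentiating `χ̄ = χ · (χ⁻¹ χ̄)` at `t = 0` for solutions through `a` and `a b` gives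
`f(a b) = f(a) b + a g(b)`. Taking `a = 1` identifies `g(b) = f(b) - f(1) b`, and substituting
this back yields the Leibniz-type rule for `f`. -/

attribute [local instance] Matrix.normedAddCommGroup Matrix.normedSpace

/-- The matrix value of an invertible matrix. -/
def uval {N : ℕ} (a : (Matrix (Fin N) (Fin N) ℝ)ˣ) : Matrix (Fin N) (Fin N) ℝ := a

theorem HasDerivAt.matrix_mul {𝕜 𝔸 : Type*} [NontriviallyNormedField 𝕜] [NormedRing 𝔸]
    [NormedAlgebra 𝕜 𝔸] {l m n : Type*} [Fintype l] [Fintype m] [Fintype n]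
    {c : 𝕜 → Matrix l m 𝔸} {d : 𝕜 → Matrix m n 𝔸} {c' : Matrix l m 𝔸} {d' : Matrix m n 𝔸}
    {t : 𝕜} (hc : HasDerivAt c c' t) (hd : HasDerivAt d d' t) :
    HasDerivAt (fun s => c s * d s) (c' * d t + c t * d') t := by
  refine hasDerivAt_pi.mpr fun i => hasDerivAt_pi.mpr fun j => ?_
  simp only [Matrix.add_apply, Matrix.mul_apply, ← Finset.sum_add_distrib]
  exact HasDerivAt.fun_sum fun k _ =>
    (hasDerivAt_pi.mp (hasDerivAt_pi.mp hc i) k).mul (hasDerivAt_pi.mp (hasDerivAt_pi.mp hd k) j)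

section ErrorDynamics

variable {N : ℕ} {F G : Matrix (Fin N) (Fin N) ℝ → Matrix (Fin N) (Fin N) ℝ}

def IsSolution (F : Matrix (Fin N) (Fin N) ℝ → Matrix (Fin N) (Fin N) ℝ)
    (χ : ℝ → (Matrix (Fin N) (Fin N) ℝ)ˣ) : Prop :=
  ∀ t, HasDerivAt (fun s => uval (χ s)) (F (uval (χ t))) t

theorem apply_mul_eq_of_isSolution_error
    (hexist : ∀ x, ∃ χ, χ 0 = x ∧ IsSolution F χ)
    (hauto : ∀ χ χb, IsSolution F χ → IsSolution F χb → IsSolution G fun s => (χ s)⁻¹ * χb s)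
    (a b : (Matrix (Fin N) (Fin N) ℝ)ˣ) :
    F (uval a * uval b) = F (uval a) * uval b + uval a * G (uval b) := by
  obtain ⟨χ, hχ0, hχ⟩ := hexist a
  obtain ⟨χb, hχb0, hχb⟩ := hexist (a * b)
  have hfactor : (fun s => uval (χ s) * uval ((χ s)⁻¹ * χb s)) = fun s => uval (χb s) := by
    funext s
    simp only [uval, ← Units.val_mul, mul_inv_cancel_left]
  have hprod := (hχ 0).matrix_mul (hauto χ χb hχ hχb 0)
  rw [hfactor] at hprod
  have h := (hχb 0).unique hprod
  simp only [hχ0, hχb0, inv_mul_cancel_left] at h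
  exact h

theorem error_field_eq
    (hmul : ∀ a b : (Matrix (Fin N) (Fin N) ℝ)ˣ,
      F (uval a * uval b) = F (uval a) * uval b + uval a * G (uval b))
    (η : (Matrix (Fin N) (Fin N) ℝ)ˣ) :
    G (uval η) = F (uval η) - F 1 * uval η := by
  have h := hmul 1 η
  simp only [uval, Units.val_one, one_mul] at h ⊢
  rw [h, add_sub_cancel_left]

theorem apply_mul_eq_leibniz
    (hmul : ∀ a b : (Matrix (Fin N) (Fin N) ℝ)ˣ,
      F (uval a * uval b) = F (uval a) * uval b + uval a * G (uval b))
    (a b : (Matrix (Fin N) (Fin N) ℝ)ˣ) :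
    F (uval a * uval b) = F (uval a) * uval b + uval a * F (uval b) - uval a * F 1 * uval b := by
  rw [hmul, error_field_eq hmul]
  noncomm_ring

end ErrorDynamics

/-- If, for every input `u` and every pair of solutions `χ, χ̄` of `dχ/dt = f_u(χ)`
on the group of invertible matrices, the left-invariant error `η = χ⁻¹ χ̄` satisfies
the autonomous equation `dη/dt = g_u(η)` (solutions through every initial point exist),
then `f_u(ab) = f_u(a)b + a f_u(b) - a f_u(Id) b` and `g_u(η) = f_u(η) - f_u(Id) η`. -/
theorem stmt2 {N : ℕ} {U : Type*}
    (f g : U → Matrix (Fin N) (Fin N) ℝ → Matrix (Fin N) (Fin N) ℝ)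
    (hexist : ∀ (u : U) (x : (Matrix (Fin N) (Fin N) ℝ)ˣ),
      ∃ χ : ℝ → (Matrix (Fin N) (Fin N) ℝ)ˣ, χ 0 = x ∧
        ∀ t, HasDerivAt (fun s => uval (χ s)) (f u (uval (χ t))) t)
    (hauto : ∀ (u : U) (χ χb : ℝ → (Matrix (Fin N) (Fin N) ℝ)ˣ),
      (∀ t, HasDerivAt (fun s => uval (χ s)) (f u (uval (χ t))) t) →
      (∀ t, HasDerivAt (fun s => uval (χb s)) (f u (uval (χb t))) t) →
      ∀ t, HasDerivAt (fun s => uval ((χ s)⁻¹ * χb s))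
        (g u (uval ((χ t)⁻¹ * χb t))) t) :
    (∀ (u : U) (a b : (Matrix (Fin N) (Fin N) ℝ)ˣ),
      f u (uval a * uval b)
        = f u (uval a) * uval b + uval a * f u (uval b) - uval a * f u 1 * uval b) ∧
    (∀ (u : U) (η : (Matrix (Fin N) (Fin N) ℝ)ˣ),
      g u (uval η) = f u (uval η) - f u 1 * uval η) := by
  have hmul u := apply_mul_eq_of_isSolution_error (hexist u) (hauto u)
  exact ⟨fun u => apply_mul_eq_leibniz (hmul u), fun u => error_field_eq (hmul u)⟩
end

section
/- Let g: G → ℝ^{N×N} be a time-dependent vector field satisfying g_t(ab) = a g_t(b) + g_t(a) b for all a, b ∈ G, and let Φ_t denote the associated flow. Then the flow is a group homomorphism for each time t: Φ_t(η₀ η₀') = Φ_t(η₀)·Φ_t(η₀') for all η₀, η₀' ∈ G. -/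
/-! By the product rule and the Leibniz identity for `g_t`, the pointwise product
`s ↦ Φ_s(η₀) Φ_s(η₀')` solves `dη/dt = g_t(η)` with initial value `η₀η₀'`, so by uniqueness
it is `s ↦ Φ_s(η₀η₀')`. -/

attribute [local instance] Matrix.normedAddCommGroup Matrix.normedSpace

theorem Matrix.hasDerivAt_mul {𝕜 : Type*} [NontriviallyNormedField 𝕜]
    {l m n : Type*} [Fintype l] [Fintype m] [Fintype n]
    {A : 𝕜 → Matrix l m 𝕜} {B : 𝕜 → Matrix m n 𝕜} {A' : Matrix l m 𝕜} {B' : Matrix m n 𝕜}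
    {t : 𝕜} (hA : HasDerivAt A A' t) (hB : HasDerivAt B B' t) :
    HasDerivAt (fun s => A s * B s) (A' * B t + A t * B') t := by
  have hAij (i : l) (j : m) : HasDerivAt (fun s => A s i j) (A' i j) t :=
    hasDerivAt_pi.1 (hasDerivAt_pi.1 hA i) j
  have hBjk (j : m) (k : n) : HasDerivAt (fun s => B s j k) (B' j k) t :=
    hasDerivAt_pi.1 (hasDerivAt_pi.1 hB j) k
  refine hasDerivAt_pi.2 fun i => hasDerivAt_pi.2 fun k => ?_
  simp only [Matrix.add_apply, Matrix.mul_apply, ← Finset.sum_add_distrib]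
  exact HasDerivAt.fun_sum fun j _ => (hAij i j).mul (hBjk j k)

theorem hasDerivAt_uval_mul_of_leibniz {N : ℕ}
    {g : Matrix (Fin N) (Fin N) ℝ → Matrix (Fin N) (Fin N) ℝ}
    (hg : ∀ a b : (Matrix (Fin N) (Fin N) ℝ)ˣ,
      g (uval a * uval b) = uval a * g (uval b) + g (uval a) * uval b)
    {η η' : ℝ → (Matrix (Fin N) (Fin N) ℝ)ˣ} {t : ℝ}
    (hη : HasDerivAt (fun s => uval (η s)) (g (uval (η t))) t)
    (hη' : HasDerivAt (fun s => uval (η' s)) (g (uval (η' t))) t) :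
    HasDerivAt (fun s => uval (η s * η' s)) (g (uval (η t * η' t))) t := by
  have hprod := Matrix.hasDerivAt_mul hη hη'
  rw [add_comm, ← hg] at hprod
  exact hprod

/-- If `g_t(ab) = a g_t(b) + g_t(a) b`, then the flow `Φ_t` of `dη/dt = g_t(η)`
(existence and uniqueness of solutions assumed) is a group homomorphism:
`Φ_t(η₀η₀') = Φ_t(η₀) Φ_t(η₀')`. -/
theorem stmt6 {N : ℕ}
    (g : ℝ → Matrix (Fin N) (Fin N) ℝ → Matrix (Fin N) (Fin N) ℝ)
    (hg : ∀ (t : ℝ) (a b : (Matrix (Fin N) (Fin N) ℝ)ˣ),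
      g t (uval a * uval b) = uval a * g t (uval b) + g t (uval a) * uval b)
    (Φ : ℝ → (Matrix (Fin N) (Fin N) ℝ)ˣ → (Matrix (Fin N) (Fin N) ℝ)ˣ)
    (hΦ0 : ∀ η0, Φ 0 η0 = η0)
    (hΦ : ∀ η0 t, HasDerivAt (fun s => uval (Φ s η0)) (g t (uval (Φ t η0))) t)
    (huniq : ∀ η : ℝ → (Matrix (Fin N) (Fin N) ℝ)ˣ,
      (∀ t, HasDerivAt (fun s => uval (η s)) (g t (uval (η t))) t) →
      ∀ t, η t = Φ t (η 0)) :
    ∀ (t : ℝ) (η0 η0' : (Matrix (Fin N) (Fin N) ℝ)ˣ),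
      Φ t (η0 * η0') = Φ t η0 * Φ t η0' := by
  intro t η0 η0'
  have hsol := huniq (fun s => Φ s η0 * Φ s η0')
    (fun s => hasDerivAt_uval_mul_of_leibniz (hg s) (hΦ η0 s) (hΦ η0' s)) t
  simpa only [hΦ0] using hsol.symm
end

section
/- (Log-linear property of the error) Let g_t satisfy g_t(ab) = a g_t(b) + g_t(a) b on a matrix Lie group G with exponential map exp: ℝ^{dim 𝔤} → G, and let A_t be the matrix defined by the first-order expansion g_t(exp(ξ)) = L_𝔤(A_t ξ) + O(‖ξ‖²). If ξ_t solves the linear ODE dξ_t/dt = A_t ξ_t and η_t solves the nonlinear ODE dη_t/dt = g_t(η_t) with η_0 = exp(ξ_0), then η_t = exp(ξ_t) for all t ≥ 0, for arbitrarily large ξ_0. -/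
open Matrix
attribute [local instance] Matrix.normedAddCommGroup Matrix.normedSpace

/-!
It suffices to show that `s ↦ exp (L ξ_s)` solves `dη/dt = g_t(η)`; uniqueness then identifies
it with `η`. By the chain rule this amounts to `g_t (exp X) = D exp(X) Y` for `X = L u`,
`Y = L (A_t u)`. Write `exp X = exp (X/n) ^ n`. The map `g_t` is a derivation on units and
`D exp(X)` is the derivative of an `n`-th power, so both sides expand by the same Leibniz rule into
`n` terms `a^(n-1-i) δ a^i` with `a = exp (X/n)`. The difference of the two `δ`s is
`g_t(exp (X/n)) - D exp(X/n) (Y/n) = O(1/n²)`, by the linearization hypothesis and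
`D exp(Z) = 1 + O(Z)`, while the powers `a^i = exp ((i/n) X)` stay bounded. So the difference of
the two sides is `O(1/n)` for every `n`, hence zero: no smallness of `u` is needed.
-/

open Filter Asymptotics NormedSpace Finset Topology

section Leibniz

variable {R : Type*} [Ring R]

/-- Indexed as in `HasFDerivAt.pow'`, so that `x ↦ x ^ n` has derivative `h ↦ leibnizSum x h n`. -/
def leibnizSum (a δ : R) (n : ℕ) : R := ∑ i ∈ range n, a ^ (n.pred - i) * δ * a ^ i

lemma leibnizSum_succ (a δ : R) (n : ℕ) :
    leibnizSum a δ (n + 1) = a ^ n * δ + leibnizSum a δ n * a := by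
  rw [leibnizSum, sum_range_succ', leibnizSum, sum_mul, add_comm]
  congr 1
  · simp
  · refine Finset.sum_congr rfl fun i _ => ?_
    simp only [Nat.pred_eq_sub_one]
    rw [show n + 1 - 1 - (i + 1) = n - 1 - i by omega, pow_succ, ← mul_assoc]

lemma leibnizSum_sub (a δ ε : R) (n : ℕ) :
    leibnizSum a δ n - leibnizSum a ε n = leibnizSum a (δ - ε) n := by
  simp only [leibnizSum, ← sum_sub_distrib, mul_sub, sub_mul]

lemma map_pow_of_leibniz (G : R → R) (hG : ∀ a b : Rˣ, G (a * b) = a * G b + G a * b)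
    (a : Rˣ) (n : ℕ) : G ((a : R) ^ n) = leibnizSum (a : R) (G a) n := by
  induction n with
  | zero => simpa [leibnizSum] using hG 1 1
  | succ n ih =>
    rw [pow_succ, ← Units.val_pow_eq_pow_val, hG, Units.val_pow_eq_pow_val, ih, leibnizSum_succ]

lemma norm_leibnizSum_le {𝔸 : Type*} [NormedRing 𝔸] {a : 𝔸} {B : ℝ} {n : ℕ}
    (hB : ∀ k < n, ‖a ^ k‖ ≤ B) (δ : 𝔸) : ‖leibnizSum a δ n‖ ≤ n * (B * ‖δ‖ * B) := by
  calc ‖leibnizSum a δ n‖ ≤ ∑ i ∈ range n, ‖a ^ (n.pred - i) * δ * a ^ i‖ := norm_sum_le _ _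
    _ ≤ ∑ i ∈ range n, B * ‖δ‖ * B := by
      refine sum_le_sum fun i hi => ?_
      have hi := mem_range.mp hi
      refine norm_mul₃_le.trans ?_
      gcongr ?_ * _ * ?_
      · exact mul_nonneg ((norm_nonneg _).trans (hB i hi)) (norm_nonneg δ)
      · exact hB _ (by rw [Nat.pred_eq_sub_one]; omega)
      · exact hB i hi
    _ = n * (B * ‖δ‖ * B) := by rw [sum_const, card_range, nsmul_eq_mul]

end Leibniz

namespace NormedSpace

variable {𝔸 : Type*} [NormedRing 𝔸] [NormedAlgebra ℝ 𝔸] [CompleteSpace 𝔸]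

theorem differentiable_exp : Differentiable ℝ (exp : 𝔸 → 𝔸) :=
  fun X => (exp_analytic X).differentiableAt

-- Mathlib proves `exp_nsmul` and `isUnit_exp` for normed `ℚ`-algebras; restrict the scalars.
theorem exp_smul_pow (c : ℝ) (X : 𝔸) (k : ℕ) : exp (c • X) ^ k = exp ((k * c) • X) := by
  let +nondep : NormedAlgebra ℚ 𝔸 := .restrictScalars ℚ ℝ 𝔸
  rw [← exp_nsmul, ← Nat.cast_smul_eq_nsmul ℝ, smul_smul]

theorem isUnit_exp_of_real (X : 𝔸) : IsUnit (exp X) := by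
  let +nondep : NormedAlgebra ℚ 𝔸 := .restrictScalars ℚ ℝ 𝔸
  exact isUnit_exp X

theorem exists_norm_exp_inv_smul_pow_le (X : 𝔸) :
    ∃ B, ∀ n k : ℕ, k < n → ‖exp ((n : ℝ)⁻¹ • X) ^ k‖ ≤ B := by
  obtain ⟨B, hB⟩ := (isCompact_Icc (a := (0 : ℝ)) (b := 1)).exists_bound_of_continuousOn
    (f := fun s : ℝ => exp (s • X))
    (differentiable_exp.continuous.comp (continuous_id.smul continuous_const)).continuousOn
  refine ⟨B, fun n k hk => ?_⟩
  rw [exp_smul_pow]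
  refine hB _ ⟨by positivity, ?_⟩
  rw [← div_eq_mul_inv, div_le_one (by exact_mod_cast (Nat.zero_le k).trans_lt hk)]
  exact_mod_cast hk.le

theorem fderiv_exp_sub_one_isBigO : (fun X : 𝔸 => fderiv ℝ exp X - 1) =O[𝓝 0] fun X => X := by
  have h : HasFDerivAt (fderiv ℝ exp) (fderiv ℝ (fderiv ℝ exp) 0) (0 : 𝔸) :=
    (exp_analytic (𝕂 := ℝ) (0 : 𝔸)).fderiv.differentiableAt.hasFDerivAt
  simpa [hasFDerivAt_exp_zero.fderiv] using h.isBigO_sub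

theorem fderiv_exp_eq_leibnizSum (X Y : 𝔸) {n : ℕ} (hn : n ≠ 0) :
    fderiv ℝ exp X Y =
      leibnizSum (exp ((n : ℝ)⁻¹ • X)) (fderiv ℝ exp ((n : ℝ)⁻¹ • X) ((n : ℝ)⁻¹ • Y)) n := by
  have hexp : (exp : 𝔸 → 𝔸) = fun Z => exp ((n : ℝ)⁻¹ • Z) ^ n := by
    funext Z
    rw [exp_smul_pow, mul_inv_cancel₀ (by exact_mod_cast hn), one_smul]
  have h : HasFDerivAt (fun Z : 𝔸 => exp ((n : ℝ)⁻¹ • Z) ^ n) _ X :=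
    ((differentiable_exp ((n : ℝ)⁻¹ • X)).hasFDerivAt.comp X
      ((hasFDerivAt_id X).const_smul (n : ℝ)⁻¹)).pow' n
  rw [← hexp] at h
  rw [h.fderiv]
  simp [leibnizSum, Nat.pred_eq_sub_one]

theorem eq_zero_of_eq_leibnizSum (X Z : 𝔸) (δ : ℕ → 𝔸)
    (hδ : δ =O[atTop] fun n : ℕ => ((n : ℝ)⁻¹) ^ 2)
    (hZ : ∀ n : ℕ, n ≠ 0 → Z = leibnizSum (exp ((n : ℝ)⁻¹ • X)) (δ n) n) : Z = 0 := by
  obtain ⟨B, hB⟩ := exists_norm_exp_inv_smul_pow_le X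
  have hZδ : (fun _ : ℕ => Z) =O[atTop] fun n => (n : ℝ) * ‖δ n‖ := by
    refine IsBigO.of_bound (B * B) ?_
    filter_upwards [eventually_ne_atTop 0] with n hn
    rw [hZ n hn, Real.norm_of_nonneg (by positivity)]
    refine (norm_leibnizSum_le (hB n) _).trans (le_of_eq ?_)
    ring
  have hδn : (fun n : ℕ => (n : ℝ) * ‖δ n‖) =O[atTop] fun n => (n : ℝ)⁻¹ := by
    refine ((isBigO_refl (fun n : ℕ => (n : ℝ)) atTop).mul hδ.norm_left).congr' .rfl ?_
    filter_upwards [eventually_ne_atTop 0] with n hn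
    field_simp
  exact tendsto_nhds_unique tendsto_const_nhds
    ((hZδ.trans hδn).trans_tendsto tendsto_inv_atTop_nhds_zero_nat)

variable {E : Type*} [NormedAddCommGroup E] [NormedSpace ℝ E]

theorem fderiv_exp_apply_sub_isBigO (L M : E →L[ℝ] 𝔸) :
    (fun v => fderiv ℝ exp (L v) (M v) - M v) =O[𝓝 0] fun v => ‖v‖ ^ 2 := by
  have hL : (fun v => fderiv ℝ exp (L v) - 1) =O[𝓝 0] fun v => v :=
    (fderiv_exp_sub_one_isBigO.comp_tendsto (L.continuous.tendsto' 0 0 (map_zero L))).trans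
      (L.isBigO_id _)
  have happly : (fun v => fderiv ℝ exp (L v) (M v) - M v)
      =O[𝓝 0] fun v => ‖fderiv ℝ exp (L v) - 1‖ * ‖M v‖ :=
    IsBigO.of_norm_le fun v => by simpa using (fderiv ℝ exp (L v) - 1).le_opNorm (M v)
  simpa [sq] using happly.trans (hL.norm_norm.mul (M.isBigO_id _).norm_norm)

theorem apply_exp_eq_fderiv_exp_of_leibniz (G : 𝔸 → 𝔸)
    (hG : ∀ a b : 𝔸ˣ, G (a * b) = a * G b + G a * b) (L : E →L[ℝ] 𝔸) (W : E →L[ℝ] E)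
    (hA : (fun v => G (exp (L v)) - L (W v)) =O[𝓝 0] fun v => ‖v‖ ^ 2) (u : E) :
    G (exp (L u)) = fderiv ℝ exp (L u) (L (W u)) := by
  set f := fun v => G (exp (L v)) - fderiv ℝ exp (L v) (L (W v)) with hf_def
  have hf : f =O[𝓝 0] fun v => ‖v‖ ^ 2 :=
    (hA.sub (fderiv_exp_apply_sub_isBigO L (L.comp W))).congr_left fun v => by simp [hf_def]
  have hδ : (fun n : ℕ => f ((n : ℝ)⁻¹ • u)) =O[atTop] fun n : ℕ => ((n : ℝ)⁻¹) ^ 2 := by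
    have ht : Tendsto (fun n : ℕ => (n : ℝ)⁻¹ • u) atTop (𝓝 0) := by
      simpa using (tendsto_inv_atTop_nhds_zero_nat (𝕜 := ℝ)).smul_const u
    refine (hf.comp_tendsto ht).trans
      (((isBigO_refl _ _).const_mul_left (‖u‖ ^ 2)).congr' ?_ .rfl)
    exact .of_eq (funext fun n => by simp [norm_smul, mul_pow, mul_comm])
  refine sub_eq_zero.mp (eq_zero_of_eq_leibnizSum (L u) _ _ hδ fun n hn => ?_)
  obtain ⟨a, ha⟩ := isUnit_exp_of_real ((n : ℝ)⁻¹ • L u)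
  have hpow : exp (L u) = (a : 𝔸) ^ n := by
    rw [ha, exp_smul_pow, mul_inv_cancel₀ (by exact_mod_cast hn), one_smul]
  simp only [hf_def]
  rw [map_smul W, map_smul L, map_smul L, ← leibnizSum_sub, ← fderiv_exp_eq_leibnizSum _ _ hn,
    ← ha, ← map_pow_of_leibniz G hG, ← hpow]

theorem hasDerivAt_exp_comp_of_leibniz (G : 𝔸 → 𝔸)
    (hG : ∀ a b : 𝔸ˣ, G (a * b) = a * G b + G a * b) (L : E →L[ℝ] 𝔸) (W : E →L[ℝ] E)
    (hA : (fun v => G (exp (L v)) - L (W v)) =O[𝓝 0] fun v => ‖v‖ ^ 2)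
    {ξ : ℝ → E} {t : ℝ} (hξ : HasDerivAt ξ (W (ξ t)) t) :
    HasDerivAt (fun s => exp (L (ξ s))) (G (exp (L (ξ t)))) t := by
  rw [apply_exp_eq_fderiv_exp_of_leibniz G hG L W hA]
  exact (differentiable_exp _).hasFDerivAt.comp_hasDerivAt t (L.hasFDerivAt.comp_hasDerivAt t hξ)

end NormedSpace

namespace Matrix

/- The argument above needs a submultiplicative norm, so square matrices are given the
`L∞` operator norm here; it induces the same topology as the entrywise norm. -/
section LinftyOp

attribute [local instance] Matrix.linftyOpNormedAddCommGroup Matrix.linftyOpNormedRing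
  Matrix.linftyOpNormedAlgebra

variable {m n : Type*} [Fintype m] [Fintype n]

theorem linfty_opNorm_le_sum_sum {α : Type*} [NormedAddCommGroup α] (A : Matrix m n α) :
    ‖A‖ ≤ ∑ i, ∑ j, ‖A i j‖ := by
  have h : ‖A‖₊ ≤ ∑ i, ∑ j, ‖A i j‖₊ := by
    rw [linfty_opNNNorm_def]
    exact Finset.sup_le fun i _ =>
      Finset.single_le_sum (f := fun i => ∑ j, ‖A i j‖₊) (fun _ _ => zero_le) (mem_univ i)
  simpa using NNReal.coe_le_coe.mpr h

theorem isBigO_of_forall_isBigO_apply {α : Type*} {l : Filter α} {f : α → Matrix m n ℝ}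
    {g : α → ℝ} (h : ∀ i j, (fun x => f x i j) =O[l] g) : f =O[l] g := by
  refine (IsBigO.of_norm_le fun x => linfty_opNorm_le_sum_sum (f x)).trans ?_
  exact IsBigO.fun_sum fun i _ => IsBigO.fun_sum fun j _ => (h i j).norm_left

theorem hasDerivAt_exp_comp_of_leibniz [DecidableEq n] {E : Type*} [NormedAddCommGroup E]
    [NormedSpace ℝ E] [FiniteDimensional ℝ E] (G : Matrix n n ℝ → Matrix n n ℝ)
    (hG : ∀ a b : (Matrix n n ℝ)ˣ, G (a * b) = a * G b + G a * b)
    (L : E →ₗ[ℝ] Matrix n n ℝ) (W : E →ₗ[ℝ] E)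
    (hA : ∀ i j, (fun v => (G (exp (L v)) - L (W v)) i j) =O[𝓝 0] fun v => ‖v‖ ^ 2)
    {ξ : ℝ → E} {t : ℝ} (hξ : HasDerivAt ξ (W (ξ t)) t) :
    HasDerivAt (fun s => exp (L (ξ s))) (G (exp (L (ξ t)))) t :=
  NormedSpace.hasDerivAt_exp_comp_of_leibniz G hG (LinearMap.toContinuousLinearMap L)
    (LinearMap.toContinuousLinearMap W) (isBigO_of_forall_isBigO_apply hA) hξ

end LinftyOp

end Matrix

/-- Log-linear property of the error: if `g_t(ab) = a g_t(b) + g_t(a) b`,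
`A_t` is the first-order linearization of `g_t` at the identity in exponential
coordinates (`g_t(exp(ξ)) = L(A_t ξ) + O(‖ξ‖²)`, with `L` the linear identification
of `ℝ^d` with the Lie algebra and `exp(ξ) = exp_m(L ξ)`), `ξ_t` solves the linear
ODE `dξ/dt = A_t ξ`, and `η_t` solves `dη/dt = g_t(η)` (solutions being unique)
with `η_0 = exp(ξ_0)`, then `η_t = exp(ξ_t)` for all `t ≥ 0`, for arbitrarily large `ξ_0`. -/
theorem stmt9 {N d : ℕ}
    (g : ℝ → Matrix (Fin N) (Fin N) ℝ → Matrix (Fin N) (Fin N) ℝ)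
    (hg : ∀ (t : ℝ) (a b : (Matrix (Fin N) (Fin N) ℝ)ˣ),
      g t (uval a * uval b) = uval a * g t (uval b) + g t (uval a) * uval b)
    (L : (Fin d → ℝ) →ₗ[ℝ] Matrix (Fin N) (Fin N) ℝ)
    (A : ℝ → Matrix (Fin d) (Fin d) ℝ)
    (hA : ∀ t : ℝ,
      (fun ξ : Fin d → ℝ => g t (NormedSpace.exp (L ξ)) - L (A t *ᵥ ξ))
        =O[nhds 0] (fun ξ : Fin d → ℝ => ‖ξ‖ ^ 2))
    (huniq : ∀ η₁ η₂ : ℝ → Matrix (Fin N) (Fin N) ℝ,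
      (∀ t, HasDerivAt η₁ (g t (η₁ t)) t) →
      (∀ t, HasDerivAt η₂ (g t (η₂ t)) t) → η₁ 0 = η₂ 0 → η₁ = η₂)
    (ξ : ℝ → Fin d → ℝ) (η : ℝ → Matrix (Fin N) (Fin N) ℝ)
    (hξ : ∀ t, HasDerivAt ξ (A t *ᵥ ξ t) t)
    (hη : ∀ t, HasDerivAt η (g t (η t)) t)
    (h0 : η 0 = NormedSpace.exp (L (ξ 0))) :
    ∀ t : ℝ, 0 ≤ t → η t = NormedSpace.exp (L (ξ t)) := by
  have hexp : ∀ t, HasDerivAt (fun s => NormedSpace.exp (L (ξ s)))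
      (g t (NormedSpace.exp (L (ξ t)))) t := fun t =>
    Matrix.hasDerivAt_exp_comp_of_leibniz (g t) (hg t) L (A t).mulVecLin
      (fun i j => isBigO_pi.mp (isBigO_pi.mp (hA t) i) j) (hξ t)
  exact fun t _ => congrFun (huniq η _ hη hexp h0) t
end

section
/- Let Φ_t be the flow of dη/dt = g_t(η) where g_t(ab) = a g_t(b) + g_t(a) b. Then Φ_t(exp(ξ₀)) = exp(F_t ξ₀) where F_t is the solution of the matrix ODE F_0 = Id, dF_t/dt = A_t F_t, and A_t is the linearization of g_t at the identity in exponential coordinates. -/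
/-!
Put `η s = exp (L (F s ξ₀))`. By uniqueness of solutions it suffices that `η` solves
`η' = g_s(η)`, i.e. that the derivative of `exp` at `m = L (F t ξ₀)` in the direction
`b = L (A t F t ξ₀)` equals `g_t (exp m)`. Both `s ↦ g_t (exp (s m))` (by the Leibniz rule) and
`s ↦ d exp_{s m} (s b)` (by differentiating `exp ((s + r) x) = exp (s x) exp (r x)` along
`x = m + ε b`) satisfy the cocycle identity `φ (s + r) = exp (s m) φ r + φ s exp (r m)`, and both
have derivative `b` at `0`, the first by definition of `A t`. A cocycle `X` with `X' 0 = 0`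
satisfies `X' = X m`, so `X s exp (-s m)` is constant and `X = 0`; hence the two agree at `s = 1`.
-/

open Matrix
attribute [local instance] Matrix.normedAddCommGroup Matrix.normedSpace

open NormedSpace Filter Topology Asymptotics

section ExpCocycle

variable {𝔸 : Type*} [NormedRing 𝔸] [NormedAlgebra ℝ 𝔸] {m b : 𝔸} {φ ψ : ℝ → 𝔸}

def IsExpCocycle (m : 𝔸) (φ : ℝ → 𝔸) : Prop :=
  ∀ s r : ℝ, φ (s + r) = exp (s • m) * φ r + φ s * exp (r • m)

theorem IsExpCocycle.apply_zero (hφ : IsExpCocycle m φ) : φ 0 = 0 := by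
  simpa using hφ 0 0

theorem IsExpCocycle.sub (hφ : IsExpCocycle m φ) (hψ : IsExpCocycle m ψ) :
    IsExpCocycle m (φ - ψ) := by
  intro s r
  simp only [Pi.sub_apply, hφ s r, hψ s r]
  noncomm_ring

variable [CompleteSpace 𝔸]

theorem exp_add_smul (m : 𝔸) (s r : ℝ) : exp ((s + r) • m) = exp (s • m) * exp (r • m) := by
  let +nondep : NormedAlgebra ℚ 𝔸 := .restrictScalars ℚ ℝ 𝔸
  rw [add_smul]
  exact exp_add_of_commute (((Commute.refl m).smul_left s).smul_right r)

theorem differentiableAt_exp (x : 𝔸) : DifferentiableAt ℝ exp x :=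
  (exp_analytic x).differentiableAt

theorem IsExpCocycle.hasDerivAt (hφ : IsExpCocycle m φ) (hb : HasDerivAt φ b 0) (s : ℝ) :
    HasDerivAt φ (exp (s • m) * b + φ s * m) s := by
  have hshift : HasDerivAt (fun r => exp (s • m) * φ r + φ s * exp (r • m))
      (exp (s • m) * b + φ s * m) (s - s) := by
    simpa using (hb.const_mul _).fun_add ((hasDerivAt_exp_smul_const m (0 : ℝ)).const_mul (φ s))
  refine (hshift.comp_sub_const s s).congr_of_eventuallyEq (Eventually.of_forall fun r => ?_)
  show φ r = exp (s • m) * φ (r - s) + φ s * exp ((r - s) • m)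
  rw [← hφ, add_sub_cancel]

theorem IsExpCocycle.eq_zero_of_hasDerivAt_zero (hφ : IsExpCocycle m φ)
    (h0 : HasDerivAt φ 0 0) : φ = 0 := by
  have hconj : ∀ s, HasDerivAt (fun r => φ r * exp (r • -m)) 0 s := by
    intro s
    convert (hφ.hasDerivAt h0 s).fun_mul (hasDerivAt_exp_smul_const (-m) s) using 1
    have hcomm : m * exp (s • -m) = exp (s • -m) * m :=
      (((Commute.refl m).neg_right.smul_right s).exp_right).eq
    rw [mul_zero, zero_add, mul_assoc, hcomm, mul_neg, mul_neg, add_neg_cancel]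
  ext s
  have hconst := is_const_of_deriv_eq_zero (fun r => (hconj r).differentiableAt)
    (fun r => (hconj r).deriv) s 0
  simp only [hφ.apply_zero, zero_mul] at hconst
  have hinv : exp (s • -m) * exp (s • m) = 1 := by
    rw [smul_neg, ← neg_smul, ← exp_add_smul, neg_add_cancel, zero_smul, exp_zero]
  simpa only [mul_assoc, hinv, mul_one, zero_mul, Pi.zero_apply] using
    congrArg (· * exp (s • m)) hconst

theorem IsExpCocycle.eq_of_hasDerivAt (hφ : IsExpCocycle m φ) (hψ : IsExpCocycle m ψ)
    (hφb : HasDerivAt φ b 0) (hψb : HasDerivAt ψ b 0) : φ = ψ :=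
  sub_eq_zero.mp <| (hφ.sub hψ).eq_zero_of_hasDerivAt_zero (by simpa using hφb.sub hψb)

theorem hasDerivAt_exp_smul_add_smul (m b : 𝔸) (u : ℝ) :
    HasDerivAt (fun ε : ℝ => exp (u • (m + ε • b))) (fderiv ℝ exp (u • m) (u • b)) 0 := by
  have hline : HasDerivAt (fun ε : ℝ => u • (m + ε • b)) (u • b) 0 := by
    simpa [smul_add, smul_comm u] using
      ((hasDerivAt_id (0 : ℝ)).smul_const (u • b)).const_add (u • m)
  exact (differentiableAt_exp _).hasFDerivAt.comp_hasDerivAt_of_eq 0 hline (by simp)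

theorem isExpCocycle_fderiv_exp (m b : 𝔸) :
    IsExpCocycle m fun s => fderiv ℝ exp (s • m) (s • b) := by
  intro s r
  have hprod := (hasDerivAt_exp_smul_add_smul m b s).fun_mul (hasDerivAt_exp_smul_add_smul m b r)
  have hsum : (fun ε : ℝ => exp ((s + r) • (m + ε • b))) =
      fun ε => exp (s • (m + ε • b)) * exp (r • (m + ε • b)) :=
    funext fun ε => exp_add_smul _ s r
  have hderiv := (hasDerivAt_exp_smul_add_smul m b (s + r)).unique (hsum ▸ hprod)
  simpa [add_comm] using hderiv

theorem hasDerivAt_fderiv_exp_smul_smul (m b : 𝔸) :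
    HasDerivAt (fun s : ℝ => fderiv ℝ exp (s • m) (s • b)) b 0 := by
  have hexp : ContDiff ℝ 1 (exp : 𝔸 → 𝔸) :=
    contDiff_iff_contDiffAt.mpr fun x => (exp_analytic (𝕂 := ℝ) x).contDiffAt
  have hcont : ContinuousAt (fun s : ℝ => fderiv ℝ exp (s • m) b) 0 :=
    ((hexp.continuous_fderiv one_ne_zero).clm_apply continuous_const).continuousAt.comp
      (continuous_id.smul continuous_const).continuousAt
  have h0 : fderiv ℝ exp ((0 : ℝ) • m) b = b := by
    simp [(hasFDerivAt_exp_zero (𝕂 := ℝ) (𝔸 := 𝔸)).fderiv]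
  rw [hasDerivAt_iff_tendsto_slope]
  refine (h0 ▸ hcont.tendsto.mono_left nhdsWithin_le_nhds).congr' ?_
  filter_upwards [self_mem_nhdsWithin] with s hs
  simp [slope, map_smul, smul_smul, inv_mul_cancel₀ hs]

theorem IsExpCocycle.apply_one_eq_fderiv_exp (hφ : IsExpCocycle m φ) (hb : HasDerivAt φ b 0) :
    φ 1 = fderiv ℝ exp m b := by
  simpa using congrFun (hφ.eq_of_hasDerivAt (isExpCocycle_fderiv_exp m b) hb
    (hasDerivAt_fderiv_exp_smul_smul m b)) 1

theorem isExpCocycle_of_leibniz {D : 𝔸 → 𝔸} (hD : ∀ a b : 𝔸ˣ, D (a * b) = a * D b + D a * b)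
    (m : 𝔸) : IsExpCocycle m fun s => D (exp (s • m)) := by
  let +nondep : NormedAlgebra ℚ 𝔸 := .restrictScalars ℚ ℝ 𝔸
  intro s r
  simpa only [exp_add_smul, IsUnit.unit_spec] using
    hD (isUnit_exp (s • m)).unit (isUnit_exp (r • m)).unit

theorem hasDerivAt_exp_comp_of_leibniz {D : 𝔸 → 𝔸}
    (hD : ∀ a b : 𝔸ˣ, D (a * b) = a * D b + D a * b) {c : ℝ → 𝔸} {t : ℝ}
    (hc : HasDerivAt c b t) (hDb : HasDerivAt (fun s : ℝ => D (exp (s • c t))) b 0) :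
    HasDerivAt (fun s => exp (c s)) (D (exp (c t))) t := by
  have hfderiv := (isExpCocycle_of_leibniz hD (c t)).apply_one_eq_fderiv_exp hDb
  rw [one_smul] at hfderiv
  rw [hfderiv]
  exact (differentiableAt_exp (c t)).hasFDerivAt.comp_hasDerivAt t hc

end ExpCocycle

theorem hasDerivAt_comp_smul_of_isBigO_sq {E F : Type*} [NormedAddCommGroup E] [NormedSpace ℝ E]
    [NormedAddCommGroup F] [NormedSpace ℝ F] {f : E → F} {ℓ : E →ₗ[ℝ] F}
    (h : (fun x => f x - ℓ x) =O[𝓝 0] fun x => ‖x‖ ^ 2) (v : E) :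
    HasDerivAt (fun s : ℝ => f (s • v)) (ℓ v) 0 := by
  have hf0 : f 0 = 0 := by
    simpa using (show (fun x => f x - ℓ x) =O[𝓝 0] fun x => ‖x - 0‖ ^ 2 by simpa using h)
      |>.eq_zero_of_norm_pow two_ne_zero
  have hline : Tendsto (fun s : ℝ => s • v) (𝓝 0) (𝓝 0) :=
    Continuous.tendsto' (by fun_prop) 0 0 (zero_smul ℝ v)
  have hsq : (fun s : ℝ => ‖s • v‖ ^ 2) =O[𝓝 0] fun s : ℝ => ‖s‖ ^ 2 :=
    IsBigO.of_bound (‖v‖ ^ 2) (Eventually.of_forall fun s => by simp [norm_smul, mul_pow, mul_comm])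
  rw [hasDerivAt_iff_isLittleO_nhds_zero]
  simpa [hf0, map_smul, Function.comp_def] using
    ((h.comp_tendsto hline).trans hsq).trans_isLittleO (isLittleO_norm_pow_id one_lt_two)

theorem hasDerivAt_exp_comp_of_leibniz_of_isBigO {N d : ℕ}
    {D : Matrix (Fin N) (Fin N) ℝ → Matrix (Fin N) (Fin N) ℝ}
    (hD : ∀ a b : (Matrix (Fin N) (Fin N) ℝ)ˣ,
      D (uval a * uval b) = uval a * D (uval b) + D (uval a) * uval b)
    {L : (Fin d → ℝ) →ₗ[ℝ] Matrix (Fin N) (Fin N) ℝ} {A : Matrix (Fin d) (Fin d) ℝ}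
    (hA : (fun ξ : Fin d → ℝ => D (exp (L ξ)) - L (A *ᵥ ξ)) =O[𝓝 0] fun ξ => ‖ξ‖ ^ 2)
    {ξ : ℝ → Fin d → ℝ} {t : ℝ} (hξ : HasDerivAt ξ (A *ᵥ ξ t) t) :
    HasDerivAt (fun s => exp (L (ξ s))) (D (exp (L (ξ t)))) t := by
  have hc := L.toContinuousLinearMap.hasFDerivAt.comp_hasDerivAt t hξ
  have hDb := hasDerivAt_comp_smul_of_isBigO_sq (ℓ := L ∘ₗ A.mulVecLin) hA (ξ t)
  simp only [map_smul] at hDb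
  -- The entrywise norm is not submultiplicative; the operator norm makes the matrices a normed
  -- ring with the same topology, which is all `HasDerivAt` sees.
  exact @hasDerivAt_exp_comp_of_leibniz _ Matrix.linftyOpNormedRing Matrix.linftyOpNormedAlgebra
    _ inferInstance D hD _ _ hc hDb

theorem stmt10_general {N d : ℕ}
    (g : ℝ → Matrix (Fin N) (Fin N) ℝ → Matrix (Fin N) (Fin N) ℝ)
    (hg : ∀ (t : ℝ) (a b : (Matrix (Fin N) (Fin N) ℝ)ˣ),
      g t (uval a * uval b) = uval a * g t (uval b) + g t (uval a) * uval b)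
    (L : (Fin d → ℝ) →ₗ[ℝ] Matrix (Fin N) (Fin N) ℝ)
    (A : ℝ → Matrix (Fin d) (Fin d) ℝ)
    (hA : ∀ t : ℝ,
      (fun ξ : Fin d → ℝ => g t (NormedSpace.exp (L ξ)) - L (A t *ᵥ ξ))
        =O[nhds 0] (fun ξ : Fin d → ℝ => ‖ξ‖ ^ 2))
    (Φ : ℝ → Matrix (Fin N) (Fin N) ℝ → Matrix (Fin N) (Fin N) ℝ)
    (huniq : ∀ η : ℝ → Matrix (Fin N) (Fin N) ℝ,
      (∀ t, HasDerivAt η (g t (η t)) t) → ∀ t, η t = Φ t (η 0))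
    (F : ℝ → Matrix (Fin d) (Fin d) ℝ)
    (hF0 : F 0 = 1)
    (hF : ∀ t, HasDerivAt F (A t * F t) t) :
    ∀ (t : ℝ) (ξ0 : Fin d → ℝ),
      Φ t (NormedSpace.exp (L ξ0)) = NormedSpace.exp (L (F t *ᵥ ξ0)) := by
  intro t ξ0
  have hξ : ∀ s, HasDerivAt (fun s => F s *ᵥ ξ0) (A s *ᵥ (F s *ᵥ ξ0)) s := fun s => by
    rw [mulVec_mulVec]
    exact ((mulVecBilin ℝ ℝ).flip ξ0).toContinuousLinearMap.hasFDerivAt.comp_hasDerivAt s (hF s)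
  have hsol := huniq (fun s => NormedSpace.exp (L (F s *ᵥ ξ0)))
    (fun s => hasDerivAt_exp_comp_of_leibniz_of_isBigO (hg s) (hA s) (hξ s)) t
  simpa [hF0] using hsol.symm

/-- If `Φ_t` is the flow of `dη/dt = g_t(η)` with `g_t(ab) = a g_t(b) + g_t(a) b`,
then `Φ_t(exp(ξ₀)) = exp(F_t ξ₀)` where `F_t` solves `F_0 = Id`, `dF_t/dt = A_t F_t`,
and `A_t` is the linearization of `g_t` at the identity in exponential coordinates. -/
theorem stmt10 {N d : ℕ}
    (g : ℝ → Matrix (Fin N) (Fin N) ℝ → Matrix (Fin N) (Fin N) ℝ)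
    (hg : ∀ (t : ℝ) (a b : (Matrix (Fin N) (Fin N) ℝ)ˣ),
      g t (uval a * uval b) = uval a * g t (uval b) + g t (uval a) * uval b)
    (L : (Fin d → ℝ) →ₗ[ℝ] Matrix (Fin N) (Fin N) ℝ)
    (A : ℝ → Matrix (Fin d) (Fin d) ℝ)
    (hA : ∀ t : ℝ,
      (fun ξ : Fin d → ℝ => g t (NormedSpace.exp (L ξ)) - L (A t *ᵥ ξ))
        =O[nhds 0] (fun ξ : Fin d → ℝ => ‖ξ‖ ^ 2))
    (Φ : ℝ → Matrix (Fin N) (Fin N) ℝ → Matrix (Fin N) (Fin N) ℝ)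
    (hΦ0 : ∀ x, Φ 0 x = x)
    (hΦ : ∀ x t, HasDerivAt (fun s => Φ s x) (g t (Φ t x)) t)
    (huniq : ∀ η : ℝ → Matrix (Fin N) (Fin N) ℝ,
      (∀ t, HasDerivAt η (g t (η t)) t) → ∀ t, η t = Φ t (η 0))
    (F : ℝ → Matrix (Fin d) (Fin d) ℝ)
    (hF0 : F 0 = 1)
    (hF : ∀ t, HasDerivAt F (A t * F t) t) :
    ∀ (t : ℝ) (ξ0 : Fin d → ℝ),
      Φ t (NormedSpace.exp (L ξ0)) = NormedSpace.exp (L (F t *ᵥ ξ0)) :=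
  stmt10_general g hg L A hA Φ huniq F hF0 hF
end

section
/- For the 2D car with GPS measurements, the state transition matrix Φ_{t_n}^{t_{n+1}} of the linearized left-invariant error, solving dΦ/dt = A_tΦ with A_t = -[[0,0,0],[0,0,-u_tv_t],[-v_t,u_tv_t,0]], satisfies (Φ_{t_n}^{t_{n+1}})ᵀ Φ_{t_n}^{t_{n+1}} ⪰ exp(-v_max(t_{n+1}-t_n)) I₃ provided |v_t| ≤ v_max for all t. [Here the relevant bound on A_t + A_tᵀ is that its eigenvalues are bounded below by -v_max since the symmetric part involves only the entry ±v_t.] -/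
open Matrix
attribute [local instance] Matrix.normedAddCommGroup Matrix.normedSpace

/-- The linearized error propagation matrix of the 2D car with GPS measurements:
`A_t = -[[0,0,0],[0,0,-u_t v_t],[-v_t, u_t v_t, 0]]`. -/
def Acar16 (u v : ℝ) : Matrix (Fin 3) (Fin 3) ℝ :=
  -(!![0, 0, 0; 0, 0, -(u * v); -v, u * v, 0])

/-!
For a fixed vector `x`, the squared length `f t = ‖Φ t x‖²` has derivative
`(Φ t x)ᵀ (A_t + A_tᵀ) (Φ t x) ≥ -c f t` as soon as `A_t + A_tᵀ + c I ⪰ 0`, so `exp (c t) f t` is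
nondecreasing and `f b ≥ exp (-c (b - a)) ‖x‖²`. For the car, `A_t + A_tᵀ` has the single
off-diagonal pair `v_t`, and `|2 v x₀ x₂| ≤ v_max (x₀² + x₂²)` gives the bound with `c = v_max`.
-/

section

variable {m n : Type*} [Fintype n]

theorem HasDerivAt.mulVec_const {Φ : ℝ → Matrix m n ℝ} {Φ' : Matrix m n ℝ} {t : ℝ}
    (hΦ : HasDerivAt Φ Φ' t) (x : n → ℝ) :
    HasDerivAt (fun s => Φ s *ᵥ x) (Φ' *ᵥ x) t :=
  hasDerivAt_pi.2 fun i => by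
    simpa only [mulVec, dotProduct] using
      HasDerivAt.fun_sum fun j _ => ((hasDerivAt_pi.1 (hasDerivAt_pi.1 hΦ i) j).mul_const (x j))

theorem HasDerivAt.dotProduct {y z : ℝ → n → ℝ} {y' z' : n → ℝ} {t : ℝ}
    (hy : HasDerivAt y y' t) (hz : HasDerivAt z z' t) :
    HasDerivAt (fun s => y s ⬝ᵥ z s) (y' ⬝ᵥ z t + y t ⬝ᵥ z') t := by
  have h := HasDerivAt.fun_sum (u := Finset.univ) fun i _ =>
    (hasDerivAt_pi.1 hy i).fun_mul (hasDerivAt_pi.1 hz i)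
  rwa [Finset.sum_add_distrib] at h

theorem neg_mul_dotProduct_self_le_of_posSemidef [DecidableEq n] {A : Matrix n n ℝ} {c : ℝ}
    (hA : (A + Aᵀ + c • 1).PosSemidef) (y : n → ℝ) :
    -c * (y ⬝ᵥ y) ≤ 2 * (y ⬝ᵥ (A *ᵥ y)) := by
  have hq := (posSemidef_iff_dotProduct_mulVec.1 hA).2 y
  have hT : y ⬝ᵥ (Aᵀ *ᵥ y) = y ⬝ᵥ (A *ᵥ y) := by
    rw [mulVec_transpose, dotProduct_comm, ← dotProduct_mulVec]
  simp only [star_trivial, add_mulVec, smul_mulVec, one_mulVec, dotProduct_add,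
    dotProduct_smul, smul_eq_mul, hT] at hq
  linarith

end

theorem exp_neg_mul_le_of_hasDerivAt {f f' : ℝ → ℝ} {c a b : ℝ}
    (hf : ∀ t, HasDerivAt f (f' t) t) (hf' : ∀ t, -c * f t ≤ f' t) (hab : a ≤ b) :
    Real.exp (-c * (b - a)) * f a ≤ f b := by
  set w : ℝ → ℝ := fun t => Real.exp (c * (t - a))
  have hw : ∀ t, HasDerivAt w (c * w t) t := fun t => by
    simpa [w, mul_comm] using (((hasDerivAt_id t).sub_const a).const_mul c).exp
  have hmono : Monotone (fun t => w t * f t) := by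
    refine monotone_of_deriv_nonneg (fun t => ((hw t).fun_mul (hf t)).differentiableAt) fun t => ?_
    rw [((hw t).fun_mul (hf t)).deriv]
    nlinarith [hf' t, Real.exp_pos (c * (t - a))]
  have hab' := hmono hab
  simp only [w, sub_self, mul_zero, Real.exp_zero, one_mul] at hab'
  calc Real.exp (-c * (b - a)) * f a
      ≤ Real.exp (-c * (b - a)) * (Real.exp (c * (b - a)) * f b) :=
        mul_le_mul_of_nonneg_left hab' (Real.exp_pos _).le
    _ = f b := by rw [← mul_assoc, ← Real.exp_add]; ring_nf; rw [Real.exp_zero, one_mul]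

theorem posSemidef_transpose_mul_sub_exp_smul_one {n : Type*} [Fintype n] [DecidableEq n]
    {A Φ : ℝ → Matrix n n ℝ} {c a b : ℝ} (hA : ∀ t, (A t + (A t)ᵀ + c • 1).PosSemidef)
    (hΦa : Φ a = 1) (hΦ : ∀ t, HasDerivAt Φ (A t * Φ t) t) (hab : a ≤ b) :
    ((Φ b)ᵀ * Φ b - Real.exp (-c * (b - a)) • 1).PosSemidef := by
  refine posSemidef_iff_dotProduct_mulVec.2 ⟨?_, fun x => ?_⟩
  · simp [IsHermitian, transpose_sub, transpose_mul, transpose_smul]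
  have hy : ∀ t, HasDerivAt (fun s => Φ s *ᵥ x) (A t *ᵥ (Φ t *ᵥ x)) t := fun t => by
    simpa only [mulVec_mulVec] using (hΦ t).mulVec_const x
  have hgrowth := exp_neg_mul_le_of_hasDerivAt (fun t => (hy t).dotProduct (hy t))
    (fun t => by
      rw [dotProduct_comm (A t *ᵥ _), ← two_mul]
      exact neg_mul_dotProduct_self_le_of_posSemidef (hA t) _) hab
  rw [hΦa, one_mulVec] at hgrowth
  rw [sub_mulVec, ← mulVec_mulVec, star_trivial, dotProduct_sub, dotProduct_mulVec,
    vecMul_transpose, smul_mulVec, one_mulVec, dotProduct_smul, smul_eq_mul]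
  linarith

theorem Acar16_add_transpose_add_smul_posSemidef {u v vmax : ℝ} (hv : |v| ≤ vmax) :
    (Acar16 u v + (Acar16 u v)ᵀ + vmax • 1).PosSemidef := by
  have hA : Acar16 u v + (Acar16 u v)ᵀ + vmax • 1 = !![vmax, 0, v; 0, vmax, 0; v, 0, vmax] := by
    ext i j; fin_cases i <;> fin_cases j <;> simp [Acar16]
  rw [hA, posSemidef_iff_dotProduct_mulVec]
  refine ⟨by ext i j; fin_cases i <;> fin_cases j <;> rfl, fun x => ?_⟩
  obtain ⟨hv₁, hv₂⟩ := abs_le.1 hv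
  simp only [dotProduct, Pi.star_apply, star_trivial, mulVec, of_apply, cons_val', cons_val_fin_one,
    Fin.sum_univ_three, cons_val_zero, cons_val_one, cons_val, zero_mul, add_zero, zero_add]
  nlinarith [sq_nonneg (x 1), mul_nonneg (by linarith : 0 ≤ vmax - v) (sq_nonneg (x 0 - x 2)),
    mul_nonneg (by linarith : 0 ≤ vmax + v) (sq_nonneg (x 0 + x 2))]

/-- For the 2D car with GPS measurements, the state transition matrix of the
linearized left-invariant error satisfies
`Φᵀ Φ ⪰ exp(-v_max (t_{n+1} - t_n)) I₃` provided `|v_t| ≤ v_max`. -/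
theorem stmt16 (u v : ℝ → ℝ) (vmax : ℝ) (hv : ∀ t, |v t| ≤ vmax)
    (tn t1 : ℝ) (htt : tn ≤ t1)
    (Φ : ℝ → Matrix (Fin 3) (Fin 3) ℝ)
    (hΦn : Φ tn = 1)
    (hΦ : ∀ t, HasDerivAt Φ (Acar16 (u t) (v t) * Φ t) t) :
    ((Φ t1)ᵀ * Φ t1 - Real.exp (-vmax * (t1 - tn)) • (1 : Matrix (Fin 3) (Fin 3) ℝ)).PosSemidef :=
  posSemidef_transpose_mul_sub_exp_smul_one
    (fun t => Acar16_add_transpose_add_smul_posSemidef (hv t)) hΦn hΦ htt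
end
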